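/- arXiv:2507.17577 — 2 statements merged into one kernel-verified Lean document; each statement's English description precedes it below -/
import Mathlib

section
/- For the Sign-OPT estimator v = Σ_{i=1}^q sign(∇g(θ)^T u_i) · u_i over a uniformly random orthonormal set {u_1,...,u_q} in R^d, the cosine similarity γ between v and ∇g(θ) satisfies E[γ] = √q · Γ(d/2)/(Γ((d+1)/2)√π). -/
open MeasureTheory
open scoped RealInnerProductSpace BigOperators

noncomputable section

/-- A random family `u : Ω → Fin q → ℝ^d` is a uniformly random orthonormal set
inside the subspace `S`: it is a.e.-measurable, almost surely an orthonormal
family of vectors of `S`, and its law is invariant under every linear isometry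
of `ℝ^d` mapping `S` into itself. -/
def IsUniformOrthonormalIn {Ω : Type*} [MeasurableSpace Ω] {d q : ℕ}
    (P : Measure Ω) (u : Ω → Fin q → EuclideanSpace ℝ (Fin d))
    (S : Submodule ℝ (EuclideanSpace ℝ (Fin d))) : Prop :=
  AEMeasurable u P ∧ (∀ᵐ ω ∂P, Orthonormal ℝ (u ω) ∧ ∀ i, u ω i ∈ S) ∧
    ∀ T : EuclideanSpace ℝ (Fin d) ≃ₗᵢ[ℝ] EuclideanSpace ℝ (Fin d),
      (∀ x ∈ S, T x ∈ S) →
      Measure.map (fun ω i => T (u ω i)) P = Measure.map u P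


open Real Set
set_option maxHeartbeats 1000000

namespace SignOPTAux

variable {d : ℕ}

/-- Gaussian weight. -/
def gw (d : ℕ) (x : EuclideanSpace ℝ (Fin d)) : ℝ := Real.exp (-(2⁻¹) * ‖x‖ ^ 2)

lemma gw_pos (x : EuclideanSpace ℝ (Fin d)) : 0 < gw d x := Real.exp_pos _

lemma continuous_gw : Continuous (gw d) := by
  unfold gw; fun_prop

lemma gw_prod (x : EuclideanSpace ℝ (Fin d)) :
    gw d x = ∏ i, Real.exp (-(2⁻¹) * (x i) ^ 2) := by
  rw [← Real.exp_sum]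
  unfold gw
  congr 1
  have : ‖x‖ ^ 2 = ∑ i, (x i) ^ 2 := by
    rw [EuclideanSpace.norm_eq, Real.sq_sqrt (by positivity)]
    simp [sq_abs]
  rw [this, Finset.mul_sum]

lemma integrable_one_dim_gauss : Integrable (fun t : ℝ => Real.exp (-(2⁻¹) * t ^ 2)) :=
  integrable_exp_neg_mul_sq (by norm_num)

lemma integrable_abs_one_dim_gauss : Integrable (fun t : ℝ => |t| * Real.exp (-(2⁻¹) * t ^ 2)) := by
  have := integrable_mul_exp_neg_mul_sq (b := 2⁻¹) (by norm_num)
  have h := this.abs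
  refine h.congr (Filter.Eventually.of_forall fun t => ?_)
  simp only [abs_mul, abs_of_nonneg (Real.exp_pos _).le]

/-- the one-dimensional factor functions -/
def fct (i₀ i : Fin d) : ℝ → ℝ :=
  fun t => (if i = i₀ then |t| else 1) * Real.exp (-(2⁻¹) * t ^ 2)

lemma integrable_fct (i₀ i : Fin d) : Integrable (fct i₀ i) := by
  unfold fct
  split
  · exact integrable_abs_one_dim_gauss
  · simpa using integrable_one_dim_gauss

lemma integrable_pi_sum :
    Integrable (fun y : Fin d → ℝ =>
      ∑ i, ∏ j, fct i j (y j)) (volume : Measure (Fin d → ℝ)) :=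
  integrable_finset_sum _ fun i _ => Integrable.fintype_prod fun j => integrable_fct i j

lemma norm_le_sum_abs (x : EuclideanSpace ℝ (Fin d)) : ‖x‖ ≤ ∑ i, |x i| := by
  rw [EuclideanSpace.norm_eq]
  have h1 : ∑ i, |x i| ^ 2 ≤ (∑ i, |x i|) ^ 2 :=
    Finset.sum_sq_le_sq_sum_of_nonneg (fun i _ => abs_nonneg _)
  have h2 : Real.sqrt (∑ i, |x i| ^ 2) ≤ Real.sqrt ((∑ i, |x i|) ^ 2) :=
    Real.sqrt_le_sqrt h1
  rwa [Real.sqrt_sq (by positivity)] at h2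

abbrev eqv (d : ℕ) : EuclideanSpace ℝ (Fin d) ≃ᵐ (Fin d → ℝ) := (MeasurableEquiv.toLp 2 (Fin d → ℝ)).symm

lemma integrable_norm_gw : Integrable (fun x : EuclideanSpace ℝ (Fin d) => ‖x‖ * gw d x) volume := by
  have hH : Integrable (fun y : Fin d → ℝ => ∑ i, ∏ j, fct i j (y j))
      (volume : Measure (Fin d → ℝ)) := integrable_pi_sum
  have hint : Integrable
      (fun x : EuclideanSpace ℝ (Fin d) => ∑ i, ∏ j, fct i j (eqv d x j)) volume :=
    ((EuclideanSpace.volume_preserving_symm_measurableEquiv_toLp (Fin d)).integrable_comp_emb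
      (eqv d).measurableEmbedding).2 hH
  refine hint.mono' (continuous_norm.mul continuous_gw).aestronglyMeasurable ?_
  refine Filter.Eventually.of_forall fun x => ?_
  have key : ∀ i : Fin d, ∏ j, fct i j (x j) = |x i| * gw d x := by
    intro i
    rw [gw_prod]
    unfold fct
    rw [Finset.prod_mul_distrib]
    congr 1
    simp [Finset.prod_ite_eq', Finset.mem_univ]
  have h2 : ∑ i, ∏ j, fct i j (eqv d x j) = (∑ i, |x i|) * gw d x := by
    rw [Finset.sum_mul]
    exact Finset.sum_congr rfl fun i _ => key i
  rw [Real.norm_eq_abs, abs_of_nonneg (mul_nonneg (norm_nonneg x) (gw_pos x).le), h2]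
  exact mul_le_mul_of_nonneg_right (norm_le_sum_abs x) (gw_pos x).le

lemma integrable_abs_inner_gw (v : EuclideanSpace ℝ (Fin d)) :
    Integrable (fun x : EuclideanSpace ℝ (Fin d) => |⟪v, x⟫| * gw d x) volume := by
  refine (integrable_norm_gw.const_mul ‖v‖).mono'
    (((Continuous.inner continuous_const continuous_id).abs.mul continuous_gw).aestronglyMeasurable) ?_
  refine Filter.Eventually.of_forall fun x => ?_
  rw [Real.norm_eq_abs, abs_of_nonneg (mul_nonneg (abs_nonneg _) (gw_pos x).le)]
  have : |⟪v, x⟫| ≤ ‖v‖ * ‖x‖ := abs_real_inner_le_norm v x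
  calc |⟪v, x⟫| * gw d x ≤ (‖v‖ * ‖x‖) * gw d x :=
        mul_le_mul_of_nonneg_right this (gw_pos x).le
    _ = ‖v‖ * (‖x‖ * gw d x) := by ring

lemma prod_fct (i : Fin d) (x : EuclideanSpace ℝ (Fin d)) :
    ∏ j, fct i j (x j) = |x i| * gw d x := by
  rw [gw_prod]
  unfold fct
  rw [Finset.prod_mul_distrib]
  congr 1
  simp [Finset.prod_ite_eq', Finset.mem_univ]

lemma integral_fct (i₀ i : Fin d) :
    ∫ t : ℝ, fct i₀ i t = if i = i₀ then 2 else Real.sqrt (2 * π) := by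
  unfold fct
  split
  · have h1 : ∀ t : ℝ, |t| * Real.exp (-(2⁻¹) * t ^ 2)
        = |t| * Real.exp (-(2⁻¹) * |t| ^ 2) := by
      intro t; rw [sq_abs]
    have h2 : (∫ t : ℝ, |t| * Real.exp (-(2⁻¹) * t ^ 2))
        = 2 * ∫ t in Ioi (0:ℝ), t * Real.exp (-(2⁻¹) * t ^ 2) := by
      rw [show (fun t : ℝ => |t| * Real.exp (-(2⁻¹) * t ^ 2))
          = (fun t : ℝ => (fun s : ℝ => s * Real.exp (-(2⁻¹) * s ^ 2)) |t|) by
            funext t; simp [sq_abs]]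
      exact integral_comp_abs (f := fun s : ℝ => s * Real.exp (-(2⁻¹) * s ^ 2))
    rw [h2]
    have h3 : (∫ t in Ioi (0:ℝ), t * Real.exp (-(2⁻¹) * t ^ 2))
        = ∫ t in Ioi (0:ℝ), t ^ (1:ℝ) * Real.exp (-(2⁻¹) * t ^ (2:ℝ)) := by
      refine setIntegral_congr_fun measurableSet_Ioi fun t ht => ?_
      rw [Real.rpow_one]
      norm_num [Real.rpow_natCast t 2]
    rw [h3, integral_rpow_mul_exp_neg_mul_rpow (by norm_num) (by norm_num) (by norm_num)]
    norm_num [Real.Gamma_one, Real.rpow_neg_one]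
  · simp only [one_mul]
    rw [integral_gaussian 2⁻¹, show π / 2⁻¹ = 2 * π by ring]

lemma integral_abs_single_gw (i₀ : Fin d) :
    ∫ x : EuclideanSpace ℝ (Fin d), |x i₀| * gw d x
      = 2 * Real.sqrt (2 * π) ^ (d - 1) := by
  have step1 : (∫ x : EuclideanSpace ℝ (Fin d), |x i₀| * gw d x)
      = ∫ x : EuclideanSpace ℝ (Fin d), (fun y : Fin d → ℝ => ∏ j, fct i₀ j (y j)) (eqv d x) := by
    refine integral_congr_ae (Filter.Eventually.of_forall fun x => ?_)
    exact ((prod_fct i₀ x).symm : _)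
  rw [step1,
    (EuclideanSpace.volume_preserving_symm_measurableEquiv_toLp (Fin d)).integral_comp
      (eqv d).measurableEmbedding (fun y : Fin d → ℝ => ∏ j, fct i₀ j (y j)),
    integral_fintype_prod_volume_eq_prod (f := fct i₀)]
  simp only [integral_fct]
  rw [← Finset.mul_prod_erase Finset.univ _ (Finset.mem_univ i₀), if_pos rfl]
  congr 1
  rw [Finset.prod_congr rfl fun x hx => if_neg (Finset.ne_of_mem_erase hx),
    Finset.prod_const, Finset.card_erase_of_mem (Finset.mem_univ i₀), Finset.card_univ,
    Fintype.card_fin]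

lemma ball_vol (hd : 0 < d) :
    (volume (Metric.ball (0 : EuclideanSpace ℝ (Fin d)) 1)).toReal
      = Real.sqrt π ^ d / Real.Gamma ((d : ℝ) / 2 + 1) := by
  haveI : Nonempty (Fin d) := ⟨⟨0, hd⟩⟩
  rw [EuclideanSpace.volume_ball]
  simp only [Fintype.card_fin, ENNReal.ofReal_one, one_pow, one_mul]
  rw [ENNReal.toReal_ofReal]
  positivity

lemma J_val (hd : 0 < d) :
    ∫ y in Ioi (0:ℝ), y ^ (d - 1) • (y * Real.exp (-(2⁻¹) * y ^ 2))
      = 2 ^ (((d : ℝ) - 1) / 2) * Real.Gamma (((d : ℝ) + 1) / 2) := by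
  have h1 : ∀ y ∈ Ioi (0:ℝ), y ^ (d - 1) • (y * Real.exp (-(2⁻¹) * y ^ 2))
      = y ^ ((d : ℝ)) * Real.exp (-(2⁻¹) * y ^ (2:ℝ)) := by
    intro y hy
    rw [smul_eq_mul, ← mul_assoc, ← pow_succ, Nat.sub_add_cancel hd,
      ← Real.rpow_natCast y d]
    norm_num [Real.rpow_natCast y 2]
  rw [setIntegral_congr_fun measurableSet_Ioi h1,
    integral_rpow_mul_exp_neg_mul_rpow (by norm_num)
      (by have : (0:ℝ) ≤ d := Nat.cast_nonneg d; linarith) (by norm_num)]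
  have h2 : ((2:ℝ)⁻¹) ^ (-((d : ℝ) + 1) / 2) = 2 ^ (((d : ℝ) + 1) / 2) := by
    rw [← Real.rpow_neg_one (2:ℝ), ← Real.rpow_mul (by norm_num : (0:ℝ) ≤ 2)]
    congr 1
    ring
  rw [h2]
  have h3 : (2:ℝ) ^ (((d : ℝ) + 1) / 2) * (1 / 2) = 2 ^ (((d : ℝ) - 1) / 2) := by
    rw [show (((d : ℝ) - 1) / 2) = ((d : ℝ) + 1) / 2 + (-1) by ring,
      Real.rpow_add (by norm_num), Real.rpow_neg_one]
    ring
  rw [h3]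

lemma integral_norm_gw_eq (hd : 0 < d) :
    ∫ x : EuclideanSpace ℝ (Fin d), ‖x‖ * gw d x
      = d * (Real.sqrt π ^ d / Real.Gamma ((d : ℝ) / 2 + 1)) *
          (2 ^ (((d : ℝ) - 1) / 2) * Real.Gamma (((d : ℝ) + 1) / 2)) := by
  haveI : Nonempty (Fin d) := ⟨⟨0, hd⟩⟩
  haveI : Nontrivial (EuclideanSpace ℝ (Fin d)) :=
    Module.nontrivial_of_finrank_pos (R := ℝ) (by rw [finrank_euclideanSpace_fin]; exact hd)
  have key := MeasureTheory.integral_fun_norm_addHaar (volume : Measure (EuclideanSpace ℝ (Fin d)))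
    (fun r : ℝ => r * Real.exp (-(2⁻¹) * r ^ 2))
  simp only [finrank_euclideanSpace_fin] at key
  have lhs_eq : (∫ x : EuclideanSpace ℝ (Fin d), ‖x‖ * gw d x)
      = ∫ x : EuclideanSpace ℝ (Fin d), (fun r : ℝ => r * Real.exp (-(2⁻¹) * r ^ 2)) ‖x‖ := rfl
  rw [lhs_eq, key, nsmul_eq_mul, smul_eq_mul, measureReal_def, ball_vol hd, J_val hd]
  ring

lemma I_pos (hd : 0 < d) :
    0 < d * (Real.sqrt π ^ d / Real.Gamma ((d : ℝ) / 2 + 1)) *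
        (2 ^ (((d : ℝ) - 1) / 2) * Real.Gamma (((d : ℝ) + 1) / 2)) := by
  have h1 : (0:ℝ) < Real.Gamma ((d : ℝ) / 2 + 1) := Real.Gamma_pos_of_pos (by positivity)
  have h2 : (0:ℝ) < Real.Gamma (((d : ℝ) + 1) / 2) := Real.Gamma_pos_of_pos (by positivity)
  have hπ : (0:ℝ) < Real.sqrt π := Real.sqrt_pos.mpr Real.pi_pos
  have hd' : (0:ℝ) < d := by exact_mod_cast hd
  positivity

lemma const_ratio (hd : 0 < d) :
    (2 * Real.sqrt (2 * π) ^ (d - 1)) /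
        (d * (Real.sqrt π ^ d / Real.Gamma ((d : ℝ) / 2 + 1)) *
          (2 ^ (((d : ℝ) - 1) / 2) * Real.Gamma (((d : ℝ) + 1) / 2)))
      = Real.Gamma ((d : ℝ) / 2) / (Real.Gamma (((d : ℝ) + 1) / 2) * Real.sqrt π) := by
  have hπ : (0:ℝ) < π := Real.pi_pos
  have hS : (0:ℝ) < Real.sqrt π := Real.sqrt_pos.mpr hπ
  have hG1 : (0:ℝ) < Real.Gamma ((d : ℝ) / 2) := Real.Gamma_pos_of_pos (by positivity)
  have hG2 : (0:ℝ) < Real.Gamma (((d : ℝ) + 1) / 2) := Real.Gamma_pos_of_pos (by positivity)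
  have hd' : (0:ℝ) < (d:ℝ) := by exact_mod_cast hd
  -- Γ(d/2+1) = (d/2)Γ(d/2)
  have hGadd : Real.Gamma ((d : ℝ) / 2 + 1) = ((d : ℝ) / 2) * Real.Gamma ((d : ℝ) / 2) :=
    Real.Gamma_add_one (by positivity)
  -- √(2π)^(d-1) = 2^((d-1)/2) * √π^(d-1)
  have hsplit : Real.sqrt (2 * π) ^ (d - 1)
      = 2 ^ (((d : ℝ) - 1) / 2) * Real.sqrt π ^ (d - 1) := by
    rw [Real.sqrt_mul (by norm_num), mul_pow]
    congr 1
    rw [Real.sqrt_eq_rpow, ← Real.rpow_natCast ((2:ℝ) ^ (1 / (2:ℝ))) (d-1),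
      ← Real.rpow_mul (by norm_num)]
    congr 1
    rw [Nat.cast_sub hd]
    push_cast
    ring
  -- √π^d = √π^(d-1) * √π
  have hpow : Real.sqrt π ^ d = Real.sqrt π ^ (d - 1) * Real.sqrt π := by
    rw [← pow_succ, Nat.sub_add_cancel hd]
  have hA : (0:ℝ) < (2:ℝ) ^ (((d : ℝ) - 1) / 2) := Real.rpow_pos_of_pos (by norm_num) _
  have hs' : (0:ℝ) < Real.sqrt π ^ (d - 1) := pow_pos hS _
  rw [hsplit, hpow, hGadd]
  field_simp

/-- the distinguished unit vector -/
def e0 (d : ℕ) (hd : 0 < d) : EuclideanSpace ℝ (Fin d) := EuclideanSpace.single ⟨0, hd⟩ 1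

lemma norm_e0 (hd : 0 < d) : ‖e0 d hd‖ = 1 := by
  rw [e0, EuclideanSpace.norm_single, norm_one]

lemma exists_isometry_e0 (hd : 0 < d) (v : EuclideanSpace ℝ (Fin d)) (hv : ‖v‖ = 1) :
    ∃ T : EuclideanSpace ℝ (Fin d) ≃ₗᵢ[ℝ] EuclideanSpace ℝ (Fin d), T (e0 d hd) = v := by
  set i₀ : Fin d := ⟨0, hd⟩
  have horth : Orthonormal ℝ (({i₀} : Set (Fin d)).restrict (fun _ => v)) := by
    rw [orthonormal_iff_ite]
    rintro ⟨i, hi⟩ ⟨j, hj⟩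
    simp only [Set.mem_singleton_iff] at hi hj
    subst hi; subst hj
    simp only [Set.restrict_apply, if_pos rfl]
    have : ⟪v, v⟫ = 1 := by
      rw [real_inner_self_eq_norm_sq, hv]; norm_num
    simpa [Set.restrict] using this
  obtain ⟨b, hb⟩ := Orthonormal.exists_orthonormalBasis_extension_of_card_eq
    (𝕜 := ℝ) (by simp [finrank_euclideanSpace_fin]) horth
  refine ⟨b.repr.symm, ?_⟩
  rw [e0]
  rw [b.repr_symm_single i₀]
  exact hb i₀ rfl

lemma integral_abs_inner_unit_gw (hd : 0 < d) (v : EuclideanSpace ℝ (Fin d)) (hv : ‖v‖ = 1) :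
    ∫ x : EuclideanSpace ℝ (Fin d), |⟪v, x⟫| * gw d x
      = 2 * Real.sqrt (2 * π) ^ (d - 1) := by
  obtain ⟨T, hT⟩ := exists_isometry_e0 hd v hv
  have hmp : MeasurePreserving (⇑T) (volume : Measure (EuclideanSpace ℝ (Fin d))) volume :=
    T.measurePreserving
  have hcomp := hmp.integral_comp (T.toHomeomorph.measurableEmbedding)
    (fun x => |⟪v, x⟫| * gw d x)
  rw [← hcomp]
  have heq : ∀ x : EuclideanSpace ℝ (Fin d),
      |⟪v, T x⟫| * gw d (T x) = |x (⟨0, hd⟩ : Fin d)| * gw d x := by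
    intro x
    have h1 : ⟪v, T x⟫ = ⟪e0 d hd, x⟫ := by
      rw [← hT, T.inner_map_map]
    have h2 : gw d (T x) = gw d x := by
      unfold gw; rw [T.norm_map]
    rw [h1, h2, e0, EuclideanSpace.inner_single_left]
    norm_num
  calc ∫ x, |⟪v, T x⟫| * gw d (T x)
      = ∫ x : EuclideanSpace ℝ (Fin d), |x (⟨0, hd⟩ : Fin d)| * gw d x := by
        exact integral_congr_ae (Filter.Eventually.of_forall fun x => heq x)
    _ = 2 * Real.sqrt (2 * π) ^ (d - 1) := integral_abs_single_gw _

lemma integral_abs_inner_gw_eq (hd : 0 < d) (v : EuclideanSpace ℝ (Fin d)) :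
    ∫ x : EuclideanSpace ℝ (Fin d), |⟪v, x⟫| * gw d x
      = ‖v‖ * (2 * Real.sqrt (2 * π) ^ (d - 1)) := by
  rcases eq_or_ne v 0 with rfl | hv
  · simp
  · have hnv : (0:ℝ) < ‖v‖ := norm_pos_iff.mpr hv
    set w : EuclideanSpace ℝ (Fin d) := ‖v‖⁻¹ • v with hw
    have hwn : ‖w‖ = 1 := by
      rw [hw, norm_smul, norm_inv, norm_norm, inv_mul_cancel₀ hnv.ne']
    have hvw : v = ‖v‖ • w := by
      rw [hw, smul_smul, mul_inv_cancel₀ hnv.ne', one_smul]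
    have key : ∀ x : EuclideanSpace ℝ (Fin d), |⟪v, x⟫| * gw d x
        = ‖v‖ * (|⟪w, x⟫| * gw d x) := by
      intro x
      have hinner : ⟪w, x⟫ = ‖v‖⁻¹ * ⟪v, x⟫ := real_inner_smul_left v x ‖v‖⁻¹
      rw [hinner, abs_mul, abs_inv, abs_norm]
      field_simp
    rw [integral_congr_ae (Filter.Eventually.of_forall key), integral_const_mul,
      integral_abs_inner_unit_gw hd w hwn]

end SignOPTAux

namespace SignOPTAux

section Prob

variable {Ω : Type*} [MeasurableSpace Ω] {d q : ℕ} {P : Measure Ω}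
  {u : Ω → Fin q → EuclideanSpace ℝ (Fin d)}

lemma map_eq (hu : IsUniformOrthonormalIn P u ⊤)
    (T : EuclideanSpace ℝ (Fin d) ≃ₗᵢ[ℝ] EuclideanSpace ℝ (Fin d)) :
    Measure.map (fun ω i => T (u ω i)) P = Measure.map u P :=
  hu.2.2 T fun x _ => Submodule.mem_top

lemma aemeasurable_Tu (hu : IsUniformOrthonormalIn P u ⊤)
    (T : EuclideanSpace ℝ (Fin d) ≃ₗᵢ[ℝ] EuclideanSpace ℝ (Fin d)) :
    AEMeasurable (fun ω => fun j => T (u ω j)) P := by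
  have hm : Measurable (fun v : Fin q → EuclideanSpace ℝ (Fin d) => fun j => T (v j)) :=
    measurable_pi_lambda _ fun j => T.continuous.measurable.comp (measurable_pi_apply j)
  exact hm.comp_aemeasurable hu.1

lemma integral_comp_isometry (hu : IsUniformOrthonormalIn P u ⊤)
    (T : EuclideanSpace ℝ (Fin d) ≃ₗᵢ[ℝ] EuclideanSpace ℝ (Fin d))
    (f : EuclideanSpace ℝ (Fin d) → ℝ) (hf : Measurable f) (i : Fin q) :
    ∫ ω, f (T (u ω i)) ∂P = ∫ ω, f (u ω i) ∂P := by
  have hg : Measurable (fun w : Fin q → EuclideanSpace ℝ (Fin d) => f (w i)) :=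
    hf.comp (measurable_pi_apply i)
  calc ∫ ω, f (T (u ω i)) ∂P
      = ∫ w, f (w i) ∂(Measure.map (fun ω j => T (u ω j)) P) :=
        (integral_map (aemeasurable_Tu hu T) hg.aestronglyMeasurable).symm
    _ = ∫ w, f (w i) ∂(Measure.map u P) := by rw [map_eq hu T]
    _ = ∫ ω, f (u ω i) ∂P := integral_map hu.1 hg.aestronglyMeasurable

lemma lintegral_comp_isometry (hu : IsUniformOrthonormalIn P u ⊤)
    (T : EuclideanSpace ℝ (Fin d) ≃ₗᵢ[ℝ] EuclideanSpace ℝ (Fin d))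
    (f : EuclideanSpace ℝ (Fin d) → ENNReal) (hf : Measurable f) (i : Fin q) :
    ∫⁻ ω, f (T (u ω i)) ∂P = ∫⁻ ω, f (u ω i) ∂P := by
  have hg : Measurable (fun w : Fin q → EuclideanSpace ℝ (Fin d) => f (w i)) :=
    hf.comp (measurable_pi_apply i)
  calc ∫⁻ ω, f (T (u ω i)) ∂P
      = ∫⁻ w, f (w i) ∂(Measure.map (fun ω j => T (u ω j)) P) :=
        (lintegral_map' hg.aemeasurable (aemeasurable_Tu hu T)).symm
    _ = ∫⁻ w, f (w i) ∂(Measure.map u P) := by rw [map_eq hu T]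
    _ = ∫⁻ ω, f (u ω i) ∂P := lintegral_map' hg.aemeasurable hu.1

lemma exists_isometry_swap (hd : 0 < d) {a b : EuclideanSpace ℝ (Fin d)}
    (ha : ‖a‖ = 1) (hb : ‖b‖ = 1) :
    ∃ S : EuclideanSpace ℝ (Fin d) ≃ₗᵢ[ℝ] EuclideanSpace ℝ (Fin d),
      ∀ x, ⟪a, S x⟫ = ⟪b, x⟫ := by
  obtain ⟨Ta, hTa⟩ := exists_isometry_e0 hd a ha
  obtain ⟨Tb, hTb⟩ := exists_isometry_e0 hd b hb
  refine ⟨(Ta.symm.trans Tb).symm, fun x => ?_⟩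
  have h1 : (Ta.symm.trans Tb).symm.symm a = b := by
    simp only [LinearIsometryEquiv.symm_symm, LinearIsometryEquiv.trans_apply]
    rw [← hTa, Ta.symm_apply_apply, hTb]
  calc ⟪a, (Ta.symm.trans Tb).symm x⟫
      = ⟪(Ta.symm.trans Tb).symm.symm a, (Ta.symm.trans Tb).symm.symm ((Ta.symm.trans Tb).symm x)⟫ :=
        ((Ta.symm.trans Tb).symm.symm.inner_map_map _ _).symm
    _ = ⟪b, x⟫ := by rw [h1, LinearIsometryEquiv.symm_symm, (Ta.symm.trans Tb).apply_symm_apply]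

lemma integral_inner_const (hu : IsUniformOrthonormalIn P u ⊤) (hd : 0 < d) (i : Fin q)
    {a b : EuclideanSpace ℝ (Fin d)} (ha : ‖a‖ = 1) (hb : ‖b‖ = 1)
    (f : ℝ → ℝ) (hf : Measurable f) :
    ∫ ω, f ⟪a, u ω i⟫ ∂P = ∫ ω, f ⟪b, u ω i⟫ ∂P := by
  obtain ⟨S, hS⟩ := exists_isometry_swap hd ha hb
  have hg : Measurable (fun x : EuclideanSpace ℝ (Fin d) => f ⟪a, x⟫) :=
    hf.comp (Continuous.inner continuous_const continuous_id).measurable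
  have h1 := integral_comp_isometry hu S (fun x => f ⟪a, x⟫) hg i
  simp only [hS] at h1
  exact h1.symm

lemma lintegral_inner_const (hu : IsUniformOrthonormalIn P u ⊤) (hd : 0 < d) (i : Fin q)
    {a b : EuclideanSpace ℝ (Fin d)} (ha : ‖a‖ = 1) (hb : ‖b‖ = 1)
    (f : ℝ → ENNReal) (hf : Measurable f) :
    ∫⁻ ω, f ⟪a, u ω i⟫ ∂P = ∫⁻ ω, f ⟪b, u ω i⟫ ∂P := by
  obtain ⟨S, hS⟩ := exists_isometry_swap hd ha hb
  have hg : Measurable (fun x : EuclideanSpace ℝ (Fin d) => f ⟪a, x⟫) :=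
    hf.comp (Continuous.inner continuous_const continuous_id).measurable
  have h1 := lintegral_comp_isometry hu S (fun x => f ⟪a, x⟫) hg i
  simp only [hS] at h1
  exact h1.symm

/-- the `ℝ≥0∞`-valued indicator of `{0}` -/
def ind : ℝ → ENNReal := Set.indicator ({0} : Set ℝ) (fun _ => (1 : ENNReal))

lemma measurable_ind : Measurable ind :=
  measurable_const.indicator (measurableSet_singleton 0)

lemma ind_eq_zero_iff (t : ℝ) : ind t = 0 ↔ t ≠ 0 := by
  unfold ind
  by_cases h : t = 0 <;> simp [h]

lemma lintegral_ind_inner_eq_zero {w : EuclideanSpace ℝ (Fin d)} (hw : ‖w‖ = 1) :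
    ∫⁻ x : EuclideanSpace ℝ (Fin d), ind ⟪x, w⟫ ∂volume = 0 := by
  set s : Set (EuclideanSpace ℝ (Fin d)) := {x | ⟪x, w⟫ = 0} with hs
  have hseq : s = ((ℝ ∙ w)ᗮ : Submodule ℝ (EuclideanSpace ℝ (Fin d))) := by
    ext x
    rw [hs, Set.mem_setOf_eq, SetLike.mem_coe,
      Submodule.mem_orthogonal_singleton_iff_inner_left]
  have hsm : MeasurableSet s :=
    (isClosed_eq (Continuous.inner continuous_id continuous_const) continuous_const).measurableSet
  have hvol : volume s = 0 := by
    rw [hseq]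
    refine Measure.addHaar_submodule _ _ ?_
    intro htop
    have hw' : w ∈ (ℝ ∙ w)ᗮ := by rw [htop]; trivial
    have := Submodule.mem_orthogonal_singleton_iff_inner_left.mp hw'
    rw [real_inner_self_eq_norm_sq, hw] at this
    norm_num at this
  have hfn : (fun x : EuclideanSpace ℝ (Fin d) => ind ⟪x, w⟫)
      = Set.indicator s (fun _ => (1 : ENNReal)) := by
    funext x
    unfold ind
    by_cases hx : ⟪x, w⟫ = 0
    · rw [Set.indicator_of_mem (Set.mem_singleton_iff.mpr hx),
        Set.indicator_of_mem (show x ∈ s from hx)]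
    · rw [Set.indicator_of_notMem (by simpa using hx),
        Set.indicator_of_notMem (show x ∉ s from hx)]
  rw [hfn, lintegral_indicator hsm]
  simp [hvol]

lemma ae_inner_ne_zero [IsProbabilityMeasure P] (hu : IsUniformOrthonormalIn P u ⊤)
    (hd : 0 < d) (i : Fin q) {v : EuclideanSpace ℝ (Fin d)} (hv : v ≠ 0) :
    ∀ᵐ ω ∂P, ⟪v, u ω i⟫ ≠ 0 := by
  classical
  set Z : EuclideanSpace ℝ (Fin d) → ENNReal := fun x => ∫⁻ ω, ind ⟪x, u ω i⟫ ∂P with hZ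
  -- Z is constant on nonzero vectors
  have hZconst : ∀ x : EuclideanSpace ℝ (Fin d), x ≠ 0 → Z x = Z (e0 d hd) := by
    intro x hx
    have hnx : (0:ℝ) < ‖x‖ := norm_pos_iff.mpr hx
    set w := ‖x‖⁻¹ • x with hw
    have hwn : ‖w‖ = 1 := by
      rw [hw, norm_smul, norm_inv, norm_norm, inv_mul_cancel₀ hnx.ne']
    have h1 : Z x = Z w := by
      rw [hZ]
      refine lintegral_congr fun ω => ?_
      have hsm : ⟪w, u ω i⟫ = ‖x‖⁻¹ * ⟪x, u ω i⟫ := real_inner_smul_left x (u ω i) ‖x‖⁻¹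
      rcases eq_or_ne (⟪x, u ω i⟫) 0 with h | h
      · have h2 : ⟪w, u ω i⟫ = 0 := by rw [hsm, h, mul_zero]
        rw [h, h2]
      · have h2 : ⟪w, u ω i⟫ ≠ 0 := by
          rw [hsm]; exact mul_ne_zero (inv_ne_zero hnx.ne') h
        unfold ind
        rw [Set.indicator_of_notMem (by simpa using h),
          Set.indicator_of_notMem (by simpa using h2)]
    rw [h1, hZ]
    exact lintegral_inner_const hu hd i hwn (norm_e0 hd) ind measurable_ind
  -- auxiliary measurability on the product
  set μb : Measure (EuclideanSpace ℝ (Fin d)) := volume.restrict (Metric.ball 0 1) with hμb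
  have hmeas : AEMeasurable (Function.uncurry fun (x : EuclideanSpace ℝ (Fin d)) (ω : Ω) =>
      ind ⟪x, u ω i⟫) (μb.prod P) := by
    have hsnd : AEMeasurable (fun p : EuclideanSpace ℝ (Fin d) × Ω => u p.2 i) (μb.prod P) :=
      ((measurable_pi_apply i).comp_aemeasurable hu.1).comp_quasiMeasurePreserving
        Measure.quasiMeasurePreserving_snd
    have hinner : AEMeasurable (fun p : EuclideanSpace ℝ (Fin d) × Ω => ⟪p.1, u p.2 i⟫)
        (μb.prod P) := by
      have hcont : Continuous fun pq : EuclideanSpace ℝ (Fin d) × EuclideanSpace ℝ (Fin d) =>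
          ⟪pq.1, pq.2⟫ := continuous_inner
      exact hcont.measurable.comp_aemeasurable (measurable_fst.aemeasurable.prodMk hsnd)
    exact measurable_ind.comp_aemeasurable hinner
  -- Fubini: the double integral vanishes
  have hswap : ∫⁻ x, Z x ∂μb = 0 := by
    rw [hZ]
    rw [show (∫⁻ x, ∫⁻ ω, ind ⟪x, u ω i⟫ ∂P ∂μb)
        = ∫⁻ ω, ∫⁻ x, ind ⟪x, u ω i⟫ ∂μb ∂P from lintegral_lintegral_swap hmeas]
    have hinner0 : ∀ᵐ ω ∂P, (∫⁻ x, ind ⟪x, u ω i⟫ ∂μb) = 0 := by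
      filter_upwards [hu.2.1] with ω hω
      have hwn : ‖u ω i‖ = 1 := hω.1.1 i
      have hle : (∫⁻ x, ind ⟪x, u ω i⟫ ∂μb) ≤ ∫⁻ x, ind ⟪x, u ω i⟫ ∂volume :=
        lintegral_mono' Measure.restrict_le_self le_rfl
      rw [lintegral_ind_inner_eq_zero hwn] at hle
      exact le_antisymm hle zero_le
    rw [lintegral_congr_ae hinner0, lintegral_zero]
  -- LHS equals Z (e0) * volume(ball)
  have hae : ∀ᵐ x ∂μb, Z x = Z (e0 d hd) := by
    haveI : Nontrivial (EuclideanSpace ℝ (Fin d)) :=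
      Module.nontrivial_of_finrank_pos (R := ℝ) (by rw [finrank_euclideanSpace_fin]; exact hd)
    have h0 : μb ({0} : Set (EuclideanSpace ℝ (Fin d))) = 0 := by
      rw [hμb, Measure.restrict_apply (measurableSet_singleton 0)]
      exact le_antisymm
        (le_trans (measure_mono Set.inter_subset_left) (by rw [measure_singleton])) zero_le
    have hne : ∀ᵐ x ∂μb, x ≠ 0 := by
      rw [MeasureTheory.ae_iff]
      have hset : {x : EuclideanSpace ℝ (Fin d) | ¬ x ≠ 0} = {0} := by
        ext x; simp
      rw [hset]
      exact h0
    filter_upwards [hne] with x hx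
    exact hZconst x hx
  have hZball : Z (e0 d hd) * volume (Metric.ball (0 : EuclideanSpace ℝ (Fin d)) 1) = 0 := by
    have h1 : ∫⁻ x, Z x ∂μb = ∫⁻ _x, Z (e0 d hd) ∂μb := lintegral_congr_ae hae
    rw [h1, lintegral_const, hμb, Measure.restrict_apply_univ] at hswap
    exact hswap
  have hball : volume (Metric.ball (0 : EuclideanSpace ℝ (Fin d)) 1) ≠ 0 :=
    (Metric.measure_ball_pos volume (0 : EuclideanSpace ℝ (Fin d)) one_pos).ne'
  have hZ0 : Z (e0 d hd) = 0 := by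
    rcases mul_eq_zero.mp hZball with h | h
    · exact h
    · exact absurd h hball
  have hZv : Z v = 0 := (hZconst v hv).trans hZ0
  have haem : AEMeasurable (fun ω => ind ⟪v, u ω i⟫) P := by
    refine measurable_ind.comp_aemeasurable ?_
    exact (Continuous.inner continuous_const continuous_id).measurable.comp_aemeasurable
      ((measurable_pi_apply i).comp_aemeasurable hu.1)
  have := (lintegral_eq_zero_iff' haem).mp hZv
  filter_upwards [this] with ω hω
  exact (ind_eq_zero_iff _).mp hω

lemma aem_inner (hu : IsUniformOrthonormalIn P u ⊤) (v : EuclideanSpace ℝ (Fin d)) (i : Fin q) :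
    AEMeasurable (fun ω => ⟪v, u ω i⟫) P :=
  (Continuous.inner continuous_const continuous_id).measurable.comp_aemeasurable
    ((measurable_pi_apply i).comp_aemeasurable hu.1)

lemma integrable_abs_inner_omega [IsFiniteMeasure P] (hu : IsUniformOrthonormalIn P u ⊤)
    (v : EuclideanSpace ℝ (Fin d)) (i : Fin q) :
    Integrable (fun ω => |⟪v, u ω i⟫|) P := by
  refine Integrable.mono' (integrable_const ‖v‖)
    ((continuous_abs.measurable.comp_aemeasurable (aem_inner hu v i)).aestronglyMeasurable) ?_
  filter_upwards [hu.2.1] with ω hω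
  rw [Real.norm_eq_abs, abs_abs]
  calc |⟪v, u ω i⟫| ≤ ‖v‖ * ‖u ω i‖ := abs_real_inner_le_norm v (u ω i)
    _ = ‖v‖ := by rw [hω.1.1 i, mul_one]

lemma integral_abs_inner_scale (hu : IsUniformOrthonormalIn P u ⊤) (hd : 0 < d) (i : Fin q)
    (v : EuclideanSpace ℝ (Fin d)) :
    ∫ ω, |⟪v, u ω i⟫| ∂P = ‖v‖ * ∫ ω, |⟪e0 d hd, u ω i⟫| ∂P := by
  rcases eq_or_ne v 0 with rfl | hv
  · simp
  · have hnv : (0:ℝ) < ‖v‖ := norm_pos_iff.mpr hv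
    set w := ‖v‖⁻¹ • v with hw
    have hwn : ‖w‖ = 1 := by
      rw [hw, norm_smul, norm_inv, norm_norm, inv_mul_cancel₀ hnv.ne']
    have hpt : ∀ ω, |⟪v, u ω i⟫| = ‖v‖ * |⟪w, u ω i⟫| := by
      intro ω
      have hsm : ⟪w, u ω i⟫ = ‖v‖⁻¹ * ⟪v, u ω i⟫ := real_inner_smul_left v (u ω i) ‖v‖⁻¹
      rw [hsm, abs_mul, abs_inv, abs_norm]
      field_simp
    calc ∫ ω, |⟪v, u ω i⟫| ∂P = ∫ ω, ‖v‖ * |⟪w, u ω i⟫| ∂P := by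
          exact integral_congr_ae (Filter.Eventually.of_forall hpt)
      _ = ‖v‖ * ∫ ω, |⟪w, u ω i⟫| ∂P := integral_const_mul _ _
      _ = ‖v‖ * ∫ ω, |⟪e0 d hd, u ω i⟫| ∂P := by
          rw [integral_inner_const hu hd i hwn (norm_e0 hd) (fun t => |t|)
            continuous_abs.measurable]

lemma c_times_I [IsProbabilityMeasure P] (hu : IsUniformOrthonormalIn P u ⊤)
    (hd : 0 < d) (i : Fin q) :
    (∫ ω, |⟪e0 d hd, u ω i⟫| ∂P) *
        (d * (Real.sqrt π ^ d / Real.Gamma ((d : ℝ) / 2 + 1)) *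
          (2 ^ (((d : ℝ) - 1) / 2) * Real.Gamma (((d : ℝ) + 1) / 2)))
      = 2 * Real.sqrt (2 * π) ^ (d - 1) := by
  set c : ℝ := ∫ ω, |⟪e0 d hd, u ω i⟫| ∂P with hc
  -- the product-function and its integrability
  have haem : AEMeasurable (fun p : Ω × EuclideanSpace ℝ (Fin d) => ⟪p.2, u p.1 i⟫)
      (P.prod volume) := by
    have hfst : AEMeasurable (fun p : Ω × EuclideanSpace ℝ (Fin d) => u p.1 i) (P.prod volume) :=
      ((measurable_pi_apply i).comp_aemeasurable hu.1).comp_quasiMeasurePreserving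
        Measure.quasiMeasurePreserving_fst
    have hcont : Continuous fun pq : EuclideanSpace ℝ (Fin d) × EuclideanSpace ℝ (Fin d) =>
        ⟪pq.1, pq.2⟫ := continuous_inner
    exact hcont.measurable.comp_aemeasurable (measurable_snd.aemeasurable.prodMk hfst)
  have haesm : AEStronglyMeasurable
      (fun p : Ω × EuclideanSpace ℝ (Fin d) => |⟪p.2, u p.1 i⟫| * gw d p.2) (P.prod volume) :=
    ((continuous_abs.measurable.comp_aemeasurable haem).mul
      ((continuous_gw.measurable.comp measurable_snd).aemeasurable)).aestronglyMeasurable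
  have hmap : Measure.map Prod.snd (P.prod volume)
      = (volume : Measure (EuclideanSpace ℝ (Fin d))) := by
    rw [Measure.map_snd_prod, measure_univ, one_smul]
  have hgint : Integrable (fun p : Ω × EuclideanSpace ℝ (Fin d) => ‖p.2‖ * gw d p.2)
      (P.prod volume) := by
    have h1 : Integrable (fun x : EuclideanSpace ℝ (Fin d) => ‖x‖ * gw d x)
        (Measure.map Prod.snd (P.prod volume)) := by rw [hmap]; exact integrable_norm_gw
    exact (integrable_map_measure
      (by rw [hmap]; exact (continuous_norm.mul continuous_gw).aestronglyMeasurable)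
      measurable_snd.aemeasurable).mp h1
  have hHint : Integrable
      (Function.uncurry fun (ω : Ω) (x : EuclideanSpace ℝ (Fin d)) => |⟪x, u ω i⟫| * gw d x)
      (P.prod volume) := by
    refine hgint.mono' haesm ?_
    filter_upwards [Measure.quasiMeasurePreserving_fst.tendsto_ae.eventually hu.2.1] with p hp
    obtain ⟨ω, x⟩ := p
    simp only [Function.uncurry_apply_pair]
    rw [Real.norm_eq_abs, abs_of_nonneg (mul_nonneg (abs_nonneg _) (gw_pos _).le)]
    have hCS : |⟪x, u ω i⟫| ≤ ‖x‖ * ‖u ω i‖ := abs_real_inner_le_norm _ _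
    rw [hp.1.1 i, mul_one] at hCS
    exact mul_le_mul_of_nonneg_right hCS (gw_pos _).le
  -- Fubini
  have hswap := MeasureTheory.integral_integral_swap hHint
  -- evaluate the ω-then-x side
  have hL : (∫ ω, ∫ x : EuclideanSpace ℝ (Fin d), |⟪x, u ω i⟫| * gw d x ∂volume ∂P)
      = 2 * Real.sqrt (2 * π) ^ (d - 1) := by
    have h1 : ∀ᵐ ω ∂P, (∫ x : EuclideanSpace ℝ (Fin d), |⟪x, u ω i⟫| * gw d x ∂volume)
        = 2 * Real.sqrt (2 * π) ^ (d - 1) := by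
      filter_upwards [hu.2.1] with ω hω
      have hcomm : ∀ x : EuclideanSpace ℝ (Fin d), |⟪x, u ω i⟫| = |⟪u ω i, x⟫| := by
        intro x; rw [real_inner_comm]
      rw [integral_congr_ae (Filter.Eventually.of_forall fun x => by rw [hcomm x]),
        integral_abs_inner_gw_eq hd (u ω i), hω.1.1 i, one_mul]
    rw [integral_congr_ae h1, integral_const, probReal_univ]
    simp
  -- evaluate the x-then-ω side
  have hR : (∫ x : EuclideanSpace ℝ (Fin d), ∫ ω, |⟪x, u ω i⟫| * gw d x ∂P ∂volume)
      = c * ∫ x : EuclideanSpace ℝ (Fin d), ‖x‖ * gw d x ∂volume := by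
    have h2 : ∀ x : EuclideanSpace ℝ (Fin d),
        (∫ ω, |⟪x, u ω i⟫| * gw d x ∂P) = c * (‖x‖ * gw d x) := by
      intro x
      rw [integral_mul_const, integral_abs_inner_scale hu hd i x, ← hc]
      ring
    rw [integral_congr_ae (Filter.Eventually.of_forall h2), integral_const_mul]
  rw [hL] at hswap
  rw [hR] at hswap
  rw [integral_norm_gw_eq hd] at hswap
  exact hswap.symm

lemma expectation_abs_inner [IsProbabilityMeasure P] (hu : IsUniformOrthonormalIn P u ⊤)
    (hd : 0 < d) (i : Fin q) (v : EuclideanSpace ℝ (Fin d)) :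
    ∫ ω, |⟪v, u ω i⟫| ∂P
      = ‖v‖ * (Real.Gamma ((d : ℝ) / 2) / (Real.Gamma (((d : ℝ) + 1) / 2) * Real.sqrt π)) := by
  rw [integral_abs_inner_scale hu hd i v]
  congr 1
  have hI := I_pos (d := d) hd
  have h1 := c_times_I hu hd i
  have h2 : (∫ ω, |⟪e0 d hd, u ω i⟫| ∂P)
      = (2 * Real.sqrt (2 * π) ^ (d - 1)) /
          (d * (Real.sqrt π ^ d / Real.Gamma ((d : ℝ) / 2 + 1)) *
            (2 ^ (((d : ℝ) - 1) / 2) * Real.Gamma (((d : ℝ) + 1) / 2))) :=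
    (eq_div_iff hI.ne').mpr h1
  rw [h2, const_ratio hd]

end Prob

lemma sign_mul_self_abs {t : ℝ} (ht : t ≠ 0) : Real.sign t * t = |t| := by
  rcases ht.lt_or_gt with h | h
  · rw [Real.sign_of_neg h, abs_of_neg h]; ring
  · rw [Real.sign_of_pos h, abs_of_pos h]; ring

lemma sign_sq_one {t : ℝ} (ht : t ≠ 0) : Real.sign t * Real.sign t = 1 := by
  rcases ht.lt_or_gt with h | h
  · rw [Real.sign_of_neg h]; ring
  · rw [Real.sign_of_pos h]; ring

lemma pointwise_val {d q : ℕ} {v : EuclideanSpace ℝ (Fin d)} (w : Fin q → EuclideanSpace ℝ (Fin d))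
    (hON : Orthonormal ℝ w) (hNE : ∀ i, ⟪v, w i⟫ ≠ 0) :
    ⟪∑ i, Real.sign ⟪v, w i⟫ • w i, v⟫ / (‖∑ i, Real.sign ⟪v, w i⟫ • w i‖ * ‖v‖)
      = (∑ i, |⟪v, w i⟫|) * (Real.sqrt q * ‖v‖)⁻¹ := by
  set ε : Fin q → ℝ := fun i => Real.sign ⟪v, w i⟫ with hε
  have hnum : ⟪∑ i, ε i • w i, v⟫ = ∑ i, |⟪v, w i⟫| := by
    rw [sum_inner]
    refine Finset.sum_congr rfl fun i _ => ?_
    rw [real_inner_smul_left, real_inner_comm]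
    exact sign_mul_self_abs (hNE i)
  have hnormsq : ⟪∑ i, ε i • w i, ∑ i, ε i • w i⟫ = (q : ℝ) := by
    rw [sum_inner]
    have : ∀ i : Fin q, ⟪ε i • w i, ∑ j, ε j • w j⟫ = 1 := by
      intro i
      rw [real_inner_smul_left, hON.inner_right_fintype ε i]
      exact sign_sq_one (hNE i)
    rw [Finset.sum_congr rfl fun i _ => this i]
    simp
  have hnorm : ‖∑ i, ε i • w i‖ = Real.sqrt q := by
    have h2 : ‖∑ i, ε i • w i‖ ^ 2 = (q : ℝ) := by
      rw [← real_inner_self_eq_norm_sq]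
      exact hnormsq
    rw [← Real.sqrt_sq (norm_nonneg _), h2]
  rw [hnum, hnorm, div_eq_mul_inv]

end SignOPTAux

open SignOPTAux

/-- Sign-OPT estimator, expectation of the cosine similarity:
for `v = Σ_i sign(∇g(θ)ᵀu_i) u_i` over a uniformly random orthonormal set
`{u_1,…,u_q}` in `ℝ^d` and a fixed nonzero vector `∇g(θ)`,
`E[γ] = √q · Γ(d/2)/(Γ((d+1)/2)√π)` where `γ` is the cosine similarity between
`v` and `∇g(θ)`. -/
theorem signOPT_expectation_cosine {Ω : Type*} [MeasurableSpace Ω] {d q : ℕ}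
    (hq : 1 ≤ q) (hqd : q ≤ d) (P : Measure Ω) [IsProbabilityMeasure P]
    (u : Ω → Fin q → EuclideanSpace ℝ (Fin d)) (hu : IsUniformOrthonormalIn P u ⊤)
    (gv : EuclideanSpace ℝ (Fin d)) (hgv : gv ≠ 0) :
    ∫ ω, ⟪∑ i, Real.sign ⟪gv, u ω i⟫ • u ω i, gv⟫ /
        (‖∑ i, Real.sign ⟪gv, u ω i⟫ • u ω i‖ * ‖gv‖) ∂P =
      Real.sqrt q *
        (Real.Gamma ((d : ℝ) / 2) / (Real.Gamma (((d : ℝ) + 1) / 2) * Real.sqrt Real.pi)) := by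
  have hd : 0 < d := lt_of_lt_of_le hq hqd
  have hNE : ∀ᵐ ω ∂P, ∀ i, ⟪gv, u ω i⟫ ≠ 0 :=
    (MeasureTheory.ae_all_iff).mpr fun i => ae_inner_ne_zero hu hd i hgv
  have hrw : ∀ᵐ ω ∂P,
      ⟪∑ i, Real.sign ⟪gv, u ω i⟫ • u ω i, gv⟫ /
          (‖∑ i, Real.sign ⟪gv, u ω i⟫ • u ω i‖ * ‖gv‖)
        = (∑ i, |⟪gv, u ω i⟫|) * (Real.sqrt q * ‖gv‖)⁻¹ := by
    filter_upwards [hu.2.1, hNE] with ω hON hne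
    exact pointwise_val (u ω) hON.1 hne
  rw [integral_congr_ae hrw, integral_mul_const,
    integral_finset_sum _ (fun i _ => integrable_abs_inner_omega hu gv i)]
  have hterm : ∀ i : Fin q, (∫ ω, |⟪gv, u ω i⟫| ∂P)
      = ‖gv‖ * (Real.Gamma ((d : ℝ) / 2) / (Real.Gamma (((d : ℝ) + 1) / 2) * Real.sqrt Real.pi)) :=
    fun i => expectation_abs_inner hu hd i gv
  rw [Finset.sum_congr rfl fun i _ => hterm i, Finset.sum_const, Finset.card_univ,
    Fintype.card_fin, nsmul_eq_mul]
  have hq0 : (0:ℝ) < Real.sqrt q := Real.sqrt_pos.mpr (by exact_mod_cast hq)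
  have hgv0 : (0:ℝ) < ‖gv‖ := norm_pos_iff.mpr hgv
  set g := Real.Gamma ((d : ℝ) / 2) / (Real.Gamma (((d : ℝ) + 1) / 2) * Real.sqrt Real.pi) with hg
  have hss : (q:ℝ) * (Real.sqrt q)⁻¹ = Real.sqrt q := by
    rw [show (q:ℝ) = Real.sqrt q * Real.sqrt q from (Real.mul_self_sqrt (Nat.cast_nonneg q)).symm]
    field_simp
    rw [Real.sqrt_sq hq0.le]
  rw [mul_inv]
  calc (q:ℝ) * (‖gv‖ * g) * ((Real.sqrt q)⁻¹ * ‖gv‖⁻¹)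
      = ((q:ℝ) * (Real.sqrt q)⁻¹) * (‖gv‖ * ‖gv‖⁻¹) * g := by ring
    _ = Real.sqrt q * g := by rw [hss, mul_inv_cancel₀ hgv0.ne', mul_one]
end
end

section
/- Suppose f: R^d → R is continuously differentiable with f(x) > 0, and let h(θ, λ) = f(x + λ θ/‖θ‖). For θ₀ ≠ 0 with g(θ₀) < +∞, set λ₀ = g(θ₀). If ∂h/∂λ(θ₀, λ₀) ≠ 0, then g is differentiable at θ₀ and ∇g(θ₀) = -(1/(∂h/∂λ(θ₀,λ₀))) · ∇_θ h(θ₀, λ₀). -/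
noncomputable section

open Set Filter Topology ContinuousLinearMap

/-- The distance from `x` along the ray direction `θ` to the set `{f ≤ 0}`
(as an infimum of positive radii). -/
def rayDist {d : ℕ} (f : EuclideanSpace ℝ (Fin d) → ℝ)
    (x θ : EuclideanSpace ℝ (Fin d)) : ℝ :=
  sInf {l : ℝ | 0 < l ∧ f (x + l • (‖θ‖⁻¹ • θ)) ≤ 0}

/-- The surrogate function `h(θ, λ) = f(x + λ θ/‖θ‖)`. -/
def raySurrogate {d : ℕ} (f : EuclideanSpace ℝ (Fin d) → ℝ)
    (x θ : EuclideanSpace ℝ (Fin d)) (l : ℝ) : ℝ :=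
  f (x + l • (‖θ‖⁻¹ • θ))

private lemma rayDist_basic {d : ℕ} (f : EuclideanSpace ℝ (Fin d) → ℝ)
    (hf : Continuous f) (x : EuclideanSpace ℝ (Fin d)) (hfx : 0 < f x)
    (u : EuclideanSpace ℝ (Fin d))
    (hne : {l : ℝ | 0 < l ∧ f (x + l • u) ≤ 0}.Nonempty) :
    0 < sInf {l : ℝ | 0 < l ∧ f (x + l • u) ≤ 0} ∧
      f (x + sInf {l : ℝ | 0 < l ∧ f (x + l • u) ≤ 0} • u) = 0 ∧
      ∀ l, 0 ≤ l → l < sInf {l : ℝ | 0 < l ∧ f (x + l • u) ≤ 0} → 0 < f (x + l • u) := by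
  set S := {l : ℝ | 0 < l ∧ f (x + l • u) ≤ 0} with hS
  set lam := sInf S with hlam
  have hbdd : BddBelow S := ⟨0, fun l hl => hl.1.le⟩
  have hcont : Continuous fun l : ℝ => f (x + l • u) :=
    hf.comp (continuous_const.add (continuous_id.smul continuous_const))
  have h0 : (0:ℝ) < f (x + (0:ℝ) • u) := by simpa using hfx
  have hev : ∀ᶠ l in 𝓝 (0:ℝ), 0 < f (x + l • u) :=
    (hcont.continuousAt).eventually (eventually_gt_nhds h0)
  obtain ⟨ε, hε, hball⟩ := Metric.eventually_nhds_iff.1 hev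
  have hlb : ∀ l ∈ S, ε ≤ l := by
    intro l hl
    by_contra h
    push_neg at h
    have : dist l 0 < ε := by
      rw [Real.dist_eq, sub_zero, abs_of_pos hl.1]; exact h
    exact absurd (hball this) (not_lt.2 hl.2)
  have hlampos : 0 < lam := lt_of_lt_of_le hε (le_csInf hne hlb)
  have hbefore : ∀ l, 0 ≤ l → l < lam → 0 < f (x + l • u) := by
    intro l hl0 hllam
    rcases eq_or_lt_of_le hl0 with h | h
    · simpa [← h] using hfx
    · by_contra hc
      push_neg at hc
      exact absurd (csInf_le hbdd ⟨h, hc⟩) (not_le.2 hllam)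
  have hle : f (x + lam • u) ≤ 0 := by
    have hmem : lam ∈ closure S := csInf_mem_closure hne hbdd
    have hclosed : IsClosed {l : ℝ | f (x + l • u) ≤ 0} :=
      isClosed_le hcont continuous_const
    have : closure S ⊆ {l : ℝ | f (x + l • u) ≤ 0} :=
      hclosed.closure_subset_iff.2 fun l hl => hl.2
    exact this hmem
  have hge : 0 ≤ f (x + lam • u) := by
    have htend : Tendsto (fun l : ℝ => f (x + l • u)) (𝓝[<] lam) (𝓝 (f (x + lam • u))) :=
      (hcont.continuousAt).tendsto.mono_left nhdsWithin_le_nhds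
    refine ge_of_tendsto htend ?_
    filter_upwards [Ioo_mem_nhdsLT_of_mem ⟨hlampos, le_refl lam⟩] with l hl
    exact (hbefore l hl.1.le hl.2).le
  exact ⟨hlampos, le_antisymm hle hge, hbefore⟩

private lemma deriv_nonpos_of_left_pos {g : ℝ → ℝ} {D lam : ℝ}
    (hD : HasDerivAt g D lam) (hlam : 0 < lam) (h0 : g lam = 0)
    (hpos : ∀ l, 0 < l → l < lam → 0 < g l) : D ≤ 0 := by
  have hslope : Tendsto (slope g lam) (𝓝[<] lam) (𝓝 D) :=
    (hasDerivAt_iff_tendsto_slope.1 hD).mono_left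
      (nhdsWithin_mono _ fun l hl => ne_of_lt hl)
  refine le_of_tendsto hslope ?_
  filter_upwards [Ioo_mem_nhdsLT_of_mem ⟨hlam, le_refl lam⟩] with l hl
  have h1 : 0 < g l := hpos l hl.1 hl.2
  have h2 : l - lam < 0 := sub_neg.2 hl.2
  rw [slope_def_field, h0, sub_zero]
  exact (div_nonpos_iff.2 (Or.inl ⟨h1.le, h2.le⟩))

private lemma implicit_exists {E : Type*} [NormedAddCommGroup E] [NormedSpace ℝ E]
    [CompleteSpace E] {H : E × ℝ → ℝ} {D' : E × ℝ →L[ℝ] ℝ} {θ₀ : E} {l₀ : ℝ}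
    (hstrict : HasStrictFDerivAt H D' (θ₀, l₀)) (hD : D' (0, 1) ≠ 0)
    (hH0 : H (θ₀, l₀) = 0) :
    ∃ φ : E → ℝ, φ θ₀ = l₀ ∧ (∀ᶠ θ in 𝓝 θ₀, H (θ, φ θ) = 0) ∧
      HasStrictFDerivAt φ ((-(D' (0, 1))⁻¹) • D'.comp (inl ℝ E ℝ)) θ₀ := by
  have hsplit : ∀ p : E × ℝ, D' p = D' (p.1, 0) + p.2 * D' (0, 1) := by
    intro p
    have : p = (p.1, (0:ℝ)) + p.2 • ((0:E), (1:ℝ)) := by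
      ext <;> simp
    rw [this, map_add, map_smul]
    simp [smul_eq_mul]
  set φD : ImplicitFunctionData ℝ (E × ℝ) ℝ E :=
    { leftFun := H
      leftDeriv := D'
      rightFun := Prod.fst
      rightDeriv := fst ℝ E ℝ
      pt := (θ₀, l₀)
      hasStrictFDerivAt_leftFun := hstrict
      hasStrictFDerivAt_rightFun := hasStrictFDerivAt_fst
      range_leftDeriv := LinearMap.range_eq_top.2 fun y =>
        ⟨(y / D' (0, 1)) • ((0:E), (1:ℝ)), by
          rw [map_smul]; simp [smul_eq_mul, div_mul_cancel₀ _ hD]⟩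
      range_rightDeriv := LinearMap.range_eq_top.2 fun v => ⟨(v, 0), rfl⟩
      isCompl_ker := by
        constructor
        · rw [Submodule.disjoint_def]
          rintro ⟨v, t⟩ h1 h2
          have hv : v = 0 := by simpa [LinearMap.mem_ker] using h2
          have : D' (v, t) = 0 := h1
          rw [hsplit (v, t)] at this
          simp [hv, show ((0:E), (0:ℝ)) = 0 from rfl] at this
          rcases this with h | h
          · ext <;> simp [hv, h]
          · exact absurd h hD
        · rw [codisjoint_iff, eq_top_iff]
          rintro ⟨v, t⟩ -
          have hmem : ((v, t - (D' (v, t)) / D' (0, 1)) : E × ℝ) ∈ LinearMap.ker (D' : E × ℝ →ₗ[ℝ] ℝ) := by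
            rw [LinearMap.mem_ker]
            show D' _ = 0
            rw [hsplit (v, t - D' (v, t) / D' (0, 1)), hsplit (v, t)]
            field_simp
            ring
          have hmem2 : (((0:E), (D' (v, t)) / D' (0, 1)) : E × ℝ) ∈ LinearMap.ker (fst ℝ E ℝ : E × ℝ →ₗ[ℝ] E) := by
            simp [LinearMap.mem_ker]
          refine Submodule.mem_sup.2 ⟨_, hmem, _, hmem2, ?_⟩
          ext <;> simp }
  have hψself : φD.implicitFunction 0 θ₀ = (θ₀, l₀) := by
    have := φD.implicitFunction_apply_image.self_of_nhds
    simpa [φD, hH0] using this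
  set φ : E → ℝ := fun θ => (φD.implicitFunction 0 θ).2 with hφdef
  have hφ0 : φ θ₀ = l₀ := by rw [hφdef]; simp [hψself]
  have htend : Tendsto (fun θ : E => ((0:ℝ), θ)) (𝓝 θ₀) (𝓝 (φD.prodFun φD.pt)) := by
    have : φD.prodFun φD.pt = ((0:ℝ), θ₀) := by simp [ImplicitFunctionData.prodFun, φD, hH0]
    rw [this]
    exact (continuous_const.prodMk continuous_id).tendsto θ₀
  have hev : ∀ᶠ θ in 𝓝 θ₀, H (φD.implicitFunction 0 θ) = 0 ∧
      (φD.implicitFunction 0 θ).1 = θ := by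
    have h1 := φD.left_map_implicitFunction
    have h2 := φD.right_map_implicitFunction
    filter_upwards [htend.eventually h1, htend.eventually h2] with θ ha hb
    exact ⟨ha, hb⟩
  have hev' : ∀ᶠ θ in 𝓝 θ₀, H (θ, φ θ) = 0 := by
    filter_upwards [hev] with θ ⟨ha, hb⟩
    have : ((θ, φ θ) : E × ℝ) = φD.implicitFunction 0 θ := by
      ext
      · exact hb.symm
      · rfl
    rw [this]; exact ha
  set g'inv : E →L[ℝ] E × ℝ :=
    (ContinuousLinearMap.id ℝ E).prod ((-(D' (0, 1))⁻¹) • D'.comp (inl ℝ E ℝ)) with hg'inv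
  have hright : (fst ℝ E ℝ).comp g'inv = ContinuousLinearMap.id ℝ E := by
    ext v; simp [hg'inv]
  have hleft : D'.comp g'inv = 0 := by
    ext v
    simp only [hg'inv, ContinuousLinearMap.comp_apply, ContinuousLinearMap.prod_apply,
      ContinuousLinearMap.smul_apply, ContinuousLinearMap.coe_comp', Function.comp_apply,
      ContinuousLinearMap.inl_apply, ContinuousLinearMap.id_apply, ContinuousLinearMap.zero_apply]
    rw [hsplit (v, _)]
    simp only [smul_eq_mul]
    field_simp
    ring
  have hds := φD.implicitFunction_hasStrictFDerivAt g'inv hright hleft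
  have hds' : HasStrictFDerivAt (φD.implicitFunction 0) g'inv θ₀ := by
    have hl : φD.leftFun φD.pt = 0 := hH0
    have hr : φD.rightFun φD.pt = θ₀ := rfl
    rwa [hl, hr] at hds
  refine ⟨φ, hφ0, hev', ?_⟩
  have := (hasStrictFDerivAt_snd).comp θ₀ hds'
  exact this.congr_fderiv (by ext v; simp [hg'inv])

/-- Suppose `f : ℝ^d → ℝ` is continuously differentiable with `f(x) > 0`, and
let `h(θ, λ) = f(x + λθ/‖θ‖)`. For `θ₀ ≠ 0` with `g(θ₀) < +∞`, set
`λ₀ = g(θ₀)`. If `∂h/∂λ(θ₀, λ₀) ≠ 0`, then `g` is differentiable at `θ₀` with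
gradient `∇g(θ₀) = -(1/(∂h/∂λ(θ₀,λ₀))) ∇_θ h(θ₀, λ₀)`. -/
theorem rayDist_hasGradientAt {d : ℕ} (f : EuclideanSpace ℝ (Fin d) → ℝ)
    (hf : ContDiff ℝ 1 f) (x : EuclideanSpace ℝ (Fin d)) (hfx : 0 < f x)
    (θ₀ : EuclideanSpace ℝ (Fin d)) (hθ₀ : θ₀ ≠ 0)
    (hne : {l : ℝ | 0 < l ∧ f (x + l • (‖θ₀‖⁻¹ • θ₀)) ≤ 0}.Nonempty)
    (hD : deriv (raySurrogate f x θ₀) (rayDist f x θ₀) ≠ 0) :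
    HasGradientAt (rayDist f x)
      ((-(deriv (raySurrogate f x θ₀) (rayDist f x θ₀))⁻¹) •
        gradient (fun θ => raySurrogate f x θ (rayDist f x θ₀)) θ₀) θ₀ := by
  classical
  set lam := rayDist f x θ₀ with hlamdef
  obtain ⟨hlampos', hH0'', hbefore'⟩ :=
    rayDist_basic f hf.continuous x hfx (‖θ₀‖⁻¹ • θ₀) hne
  have hlampos : 0 < lam := hlampos'
  have hH0 : f (x + lam • (‖θ₀‖⁻¹ • θ₀)) = 0 := hH0''
  have hbefore : ∀ l, 0 ≤ l → l < lam → 0 < f (x + l • (‖θ₀‖⁻¹ • θ₀)) := hbefore'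
  clear hlampos' hH0'' hbefore'
  set H : EuclideanSpace ℝ (Fin d) × ℝ → ℝ :=
    fun p => f (x + p.2 • (‖p.1‖⁻¹ • p.1)) with hHdef
  have hHcd : ∀ p : EuclideanSpace ℝ (Fin d) × ℝ, p.1 ≠ 0 → ContDiffAt ℝ 1 H p := by
    intro p hp
    apply hf.contDiffAt.comp
    apply ContDiffAt.add contDiffAt_const
    exact contDiffAt_snd.smul
      (((contDiffAt_fst.norm ℝ hp).inv (norm_ne_zero_iff.2 hp)).smul contDiffAt_fst)
  set D' : EuclideanSpace ℝ (Fin d) × ℝ →L[ℝ] ℝ := fderiv ℝ H (θ₀, lam) with hD'def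
  have hstrict : HasStrictFDerivAt H D' (θ₀, lam) :=
    (hHcd (θ₀, lam) hθ₀).hasStrictFDerivAt one_ne_zero
  -- derivative of the λ-slice
  have hcomp : ∀ θ : EuclideanSpace ℝ (Fin d), θ ≠ 0 → ∀ l : ℝ,
      HasDerivAt (fun t => H (θ, t)) (fderiv ℝ H (θ, l) ((0 : EuclideanSpace ℝ (Fin d)), 1)) l := by
    intro θ hθ l
    have hfd : HasFDerivAt H (fderiv ℝ H (θ, l)) (θ, l) :=
      ((hHcd (θ, l) hθ).differentiableAt one_ne_zero).hasFDerivAt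
    exact hfd.comp_hasDerivAt l ((hasDerivAt_const l θ).prodMk (hasDerivAt_id l))
  have hsur : raySurrogate f x θ₀ = fun t => H (θ₀, t) := rfl
  have hDeq : deriv (raySurrogate f x θ₀) lam = D' (0, 1) := by
    rw [hsur]
    exact (hcomp θ₀ hθ₀ lam).deriv
  have hDne : D' (0, 1) ≠ 0 := by rw [← hDeq]; exact hD
  have hH0' : H (θ₀, lam) = 0 := hH0
  -- the implicit function
  obtain ⟨φ, hφ0, hφev, hφd⟩ := implicit_exists hstrict hDne hH0'
  -- negativity of D on a product neighborhood
  set s : Set (EuclideanSpace ℝ (Fin d) × ℝ) := {p | p.1 ≠ 0} with hsdef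
  have hsopen : IsOpen s := isOpen_ne_fun continuous_fst continuous_const
  have hHcdon : ContDiffOn ℝ 1 H s := fun p hp => (hHcd p hp).contDiffWithinAt
  have hfderivcont : ContinuousOn (fun p => fderiv ℝ H p) s :=
    hHcdon.continuousOn_fderiv_of_isOpen hsopen le_rfl
  set Dfun : EuclideanSpace ℝ (Fin d) × ℝ → ℝ :=
    fun p => fderiv ℝ H p ((0 : EuclideanSpace ℝ (Fin d)), 1) with hDfundef
  have hDfuncont : ContinuousOn Dfun s :=
    (ContinuousLinearMap.apply ℝ ℝ ((0 : EuclideanSpace ℝ (Fin d)), (1:ℝ))).continuous.comp_continuousOn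
      hfderivcont
  have hDneg : Dfun (θ₀, lam) < 0 := by
    have h1 : Dfun (θ₀, lam) ≤ 0 :=
      deriv_nonpos_of_left_pos (hcomp θ₀ hθ₀ lam) hlampos hH0' (fun l h1 h2 => hbefore l h1.le h2)
    exact lt_of_le_of_ne h1 hDne
  have hVopen : IsOpen (s ∩ Dfun ⁻¹' Iio 0) :=
    hDfuncont.isOpen_inter_preimage hsopen isOpen_Iio
  have hVmem : ((θ₀, lam) : EuclideanSpace ℝ (Fin d) × ℝ) ∈ s ∩ Dfun ⁻¹' Iio 0 :=
    ⟨hθ₀, hDneg⟩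
  obtain ⟨u₁, v₁, hu₁, hv₁, hθu₁, hlamv₁, huv₁⟩ := isOpen_prod_iff.1 hVopen θ₀ lam hVmem
  obtain ⟨ε₁, hε₁, hball₁⟩ := Metric.isOpen_iff.1 hv₁ lam hlamv₁
  set ε : ℝ := min (ε₁ / 2) (lam / 2) with hεdef
  have hεpos : 0 < ε := lt_min (half_pos hε₁) (half_pos hlampos)
  have hIccv₁ : Icc (lam - ε) (lam + ε) ⊆ v₁ := by
    intro l hl
    apply hball₁
    rw [Metric.mem_ball, Real.dist_eq, abs_sub_lt_iff]
    constructor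
    · linarith [hl.2, min_le_left (ε₁ / 2) (lam / 2)]
    · linarith [hl.1, min_le_left (ε₁ / 2) (lam / 2)]
  have hlamε : 0 < lam - ε := by
    have := min_le_right (ε₁ / 2) (lam / 2)
    linarith
  -- tube lemma for positivity below lam - ε
  have hHconton : ContinuousOn H s := hHcdon.continuousOn
  have hnopen : IsOpen (s ∩ H ⁻¹' Ioi 0) :=
    hHconton.isOpen_inter_preimage hsopen isOpen_Ioi
  have hsub : ({θ₀} : Set (EuclideanSpace ℝ (Fin d))) ×ˢ Icc (0:ℝ) (lam - ε) ⊆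
      s ∩ H ⁻¹' Ioi 0 := by
    rintro ⟨θ, l⟩ ⟨hθ, hl⟩
    rw [mem_singleton_iff] at hθ
    subst hθ
    exact ⟨hθ₀, hbefore l hl.1 (by linarith [hl.2])⟩
  obtain ⟨u₂, v₂, hu₂, hv₂, hθu₂, hIccv₂, huv₂⟩ :=
    generalized_tube_lemma isCompact_singleton isCompact_Icc hnopen hsub
  -- eventual equality of rayDist and φ
  have hφcont : ContinuousAt φ θ₀ := hφd.continuousAt
  have hφIoo : ∀ᶠ θ in 𝓝 θ₀, φ θ ∈ Ioo (lam - ε) (lam + ε) := by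
    apply hφcont.eventually_mem
    rw [hφ0]
    exact Ioo_mem_nhds (by linarith) (by linarith)
  have heq : rayDist f x =ᶠ[𝓝 θ₀] φ := by
    filter_upwards [hφev, hφIoo, hu₁.mem_nhds hθu₁, hu₂.mem_nhds (hθu₂ rfl)]
      with θ hHθ hφθ hθ1 hθ2
    have hlamIcc : lam ∈ Icc (lam - ε) (lam + ε) := ⟨by linarith, by linarith⟩
    have hθne : θ ≠ 0 :=
      (huv₁ (show (θ, lam) ∈ u₁ ×ˢ v₁ from ⟨hθ1, hIccv₁ hlamIcc⟩)).1
    have hanti : StrictAntiOn (fun t => H (θ, t)) (Icc (lam - ε) (lam + ε)) := by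
      apply strictAntiOn_of_deriv_neg (convex_Icc _ _)
      · apply Continuous.continuousOn
        have hc : Continuous fun t : ℝ => f (x + t • (‖θ‖⁻¹ • θ)) :=
          hf.continuous.comp (continuous_const.add (continuous_id.smul continuous_const))
        exact hc
      · intro t ht
        rw [interior_Icc] at ht
        rw [(hcomp θ hθne t).deriv]
        exact (huv₁ ⟨hθ1, hIccv₁ ⟨ht.1.le, ht.2.le⟩⟩).2
    have hmemφ : φ θ ∈ {l : ℝ | 0 < l ∧ f (x + l • (‖θ‖⁻¹ • θ)) ≤ 0} := by
      refine ⟨by linarith [hφθ.1], ?_⟩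
      have : H (θ, φ θ) ≤ 0 := le_of_eq hHθ
      exact this
    have hlower : ∀ l ∈ {l : ℝ | 0 < l ∧ f (x + l • (‖θ‖⁻¹ • θ)) ≤ 0}, φ θ ≤ l := by
      rintro l ⟨hl0, hlle⟩
      by_contra hc
      push_neg at hc
      have hHle : H (θ, l) ≤ 0 := hlle
      rcases le_or_gt l (lam - ε) with h | h
      · have : (θ, l) ∈ s ∩ H ⁻¹' Ioi 0 := huv₂ ⟨hθ2, hIccv₂ ⟨hl0.le, h⟩⟩
        exact absurd this.2 (not_lt.2 hHle)
      · have h1 : l ∈ Icc (lam - ε) (lam + ε) := ⟨h.le, by linarith [hφθ.2]⟩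
        have h2 : φ θ ∈ Icc (lam - ε) (lam + ε) := ⟨hφθ.1.le, hφθ.2.le⟩
        have h3 : H (θ, φ θ) < H (θ, l) := hanti h1 h2 hc
        rw [hHθ] at h3
        exact absurd h3 (not_lt.2 hHle)
    show sInf _ = φ θ
    exact le_antisymm (csInf_le ⟨0, fun l hl => hl.1.le⟩ hmemφ)
      (le_csInf ⟨_, hmemφ⟩ hlower)
  -- conclude
  have hF : HasFDerivAt (rayDist f x)
      ((-(D' (0, 1))⁻¹) • D'.comp (inl ℝ (EuclideanSpace ℝ (Fin d)) ℝ)) θ₀ :=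
    hφd.hasFDerivAt.congr_of_eventuallyEq heq
  have hG0 : HasFDerivAt (fun θ => H (θ, lam))
      (D'.comp (inl ℝ (EuclideanSpace ℝ (Fin d)) ℝ)) θ₀ := by
    have := hstrict.hasFDerivAt.comp θ₀ ((hasFDerivAt_id (𝕜 := ℝ) θ₀).prodMk (hasFDerivAt_const lam θ₀))
    exact this
  have hgrad : gradient (fun θ => raySurrogate f x θ lam) θ₀ =
      (InnerProductSpace.toDual ℝ (EuclideanSpace ℝ (Fin d))).symm
        (D'.comp (inl ℝ (EuclideanSpace ℝ (Fin d)) ℝ)) := by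
    rw [gradient]
    congr 1
    exact hG0.fderiv
  have := hF.hasGradientAt
  rw [hDeq, hgrad]
  convert this using 1
  exact (map_smul _ _ _).symm
end
end
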